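/- arXiv:2508.07511 — 6 statements merged into one kernel-verified Lean document; each statement's English description precedes it below -/
import Mathlib

section
/- Let X and Y be bounded linear operators on a Banach space E such that e^{αX} and e^{α(X+tY)} are contractions for all α ≥ 0 and t ∈ [0,1] (e.g. X and Y dissipative). Then ‖e^{X+Y} − e^{X}‖ ≤ ‖Y‖. -/
open NormedSpace

/-! The path `s ↦ e^{sA} e^{(1-s)B}` joins `e^B` to `e^A` and has derivative
`e^{sA} (A - B) e^{(1-s)B}` (Duhamel's formula). When both semigroups are contractive on
`[0, 1]` this derivative has norm at most `‖A - B‖`, so the mean value inequality gives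
`‖e^A - e^B‖ ≤ ‖A - B‖`. Take `A = X + Y` and `B = X`. -/

section DuhamelPath

variable {𝔸 : Type*} [NormedRing 𝔸] [NormedAlgebra ℝ 𝔸] [CompleteSpace 𝔸]

theorem hasDerivAt_exp_smul_mul_exp_one_sub_smul (A B : 𝔸) (s : ℝ) :
    HasDerivAt (fun u : ℝ => exp (u • A) * exp ((1 - u) • B))
      (exp (s • A) * (A - B) * exp ((1 - s) • B)) s := by
  have hB : HasDerivAt (fun u : ℝ => exp ((1 - u) • B)) (-(B * exp ((1 - s) • B))) s := by
    simpa [Function.comp_def] using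
      (hasDerivAt_exp_smul_const' B (1 - s)).scomp s ((hasDerivAt_id s).const_sub 1)
  refine ((hasDerivAt_exp_smul_const A s).mul hB).congr_deriv ?_
  rw [mul_sub, sub_mul, mul_neg, ← sub_eq_add_neg, mul_assoc _ B]

theorem norm_exp_sub_exp_le_of_norm_exp_smul_le_one {A B : 𝔸}
    (hA : ∀ s ∈ Set.Icc (0 : ℝ) 1, ‖exp (s • A)‖ ≤ 1)
    (hB : ∀ s ∈ Set.Icc (0 : ℝ) 1, ‖exp (s • B)‖ ≤ 1) :
    ‖exp A - exp B‖ ≤ ‖A - B‖ := by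
  have hderiv_le : ∀ s ∈ Set.Icc (0 : ℝ) 1,
      ‖exp (s • A) * (A - B) * exp ((1 - s) • B)‖ ≤ ‖A - B‖ := fun s hs => by
    have hB_one_sub : ‖exp ((1 - s) • B)‖ ≤ 1 := hB (1 - s) ⟨by linarith [hs.2], by linarith [hs.1]⟩
    calc ‖exp (s • A) * (A - B) * exp ((1 - s) • B)‖
        ≤ ‖exp (s • A)‖ * ‖A - B‖ * ‖exp ((1 - s) • B)‖ := norm_mul₃_le
      _ ≤ 1 * ‖A - B‖ * 1 := by gcongr; exact hA s hs
      _ = ‖A - B‖ := by ring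
  simpa using (convex_Icc (0 : ℝ) 1).norm_image_sub_le_of_norm_hasDerivWithin_le
    (fun s _ => (hasDerivAt_exp_smul_mul_exp_one_sub_smul A B s).hasDerivWithinAt) hderiv_le
    (Set.left_mem_Icc.2 zero_le_one) (Set.right_mem_Icc.2 zero_le_one)

end DuhamelPath

/-- **Perturbations of the operator exponential.**
If `X` and `Y` are bounded operators on a Banach space `E` such that `e^{αX}` and
`e^{α(X + tY)}` are contractions for all `α ≥ 0` and `t ∈ [0,1]` (e.g. `X`, `Y` dissipative),
then `‖e^{X+Y} − e^{X}‖ ≤ ‖Y‖`. -/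
theorem bch_exp_perturbation {E : Type*} [NormedAddCommGroup E] [NormedSpace ℝ E]
    [CompleteSpace E] (X Y : E →L[ℝ] E)
    (hX : ∀ α : ℝ, 0 ≤ α → ‖exp (α • X)‖ ≤ 1)
    (hXY : ∀ α t : ℝ, 0 ≤ α → t ∈ Set.Icc (0 : ℝ) 1 → ‖exp (α • (X + t • Y))‖ ≤ 1) :
    ‖exp (X + Y) - exp X‖ ≤ ‖Y‖ := by
  have hXY_one : ∀ s ∈ Set.Icc (0 : ℝ) 1, ‖exp (s • (X + Y))‖ ≤ 1 := fun s hs => by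
    simpa using hXY s 1 hs.1 (Set.right_mem_Icc.2 zero_le_one)
  have hX_Icc : ∀ s ∈ Set.Icc (0 : ℝ) 1, ‖exp (s • X)‖ ≤ 1 := fun s hs => hX s hs.1
  simpa using norm_exp_sub_exp_le_of_norm_exp_smul_le_one (A := X + Y) (B := X) hXY_one hX_Icc
end

section
/- Let X, Y be bounded operators on a Banach space E. The derivative of the analytic map f(t) = e^{X + tY} is given by f'(t) = ∫_{0}^{1} e^{(1-s)(X+tY)} Y e^{s(X+tY)} ds, where the integral is a Bochner integral. -/
open NormedSpace

/-! Duhamel's formula `exp B - exp A = ∫₀¹ exp ((1 - s) • A) * (B - A) * exp (s • B) ds`, the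
fundamental theorem of calculus for `s ↦ exp ((1 - s) • A) * exp (s • B)`, turns the difference
quotient of `τ ↦ exp (X + τ • Y)` at `t` into
`∫₀¹ exp ((1 - s) • (X + t • Y)) * Y * exp (s • (X + τ • Y)) ds`.
This is continuous in `τ`, so it tends to its value at `τ = t`. -/

section Duhamel

variable {𝔸 : Type*} [NormedRing 𝔸] [NormedAlgebra ℝ 𝔸] [CompleteSpace 𝔸]

theorem hasDerivAt_exp_one_sub_smul_mul_exp_smul (A B : 𝔸) (s : ℝ) :
    HasDerivAt (fun u : ℝ => exp ((1 - u) • A) * exp (u • B))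
      (exp ((1 - s) • A) * (B - A) * exp (s • B)) s := by
  have hA : HasDerivAt (fun u : ℝ => exp ((1 - u) • A)) (-(exp ((1 - s) • A) * A)) s := by
    simpa [Function.comp_def] using
      (hasDerivAt_exp_smul_const A (1 - s)).scomp s ((hasDerivAt_id s).const_sub 1)
  convert hA.mul (hasDerivAt_exp_smul_const' B s) using 1
  · rfl
  · noncomm_ring

theorem exp_sub_exp_eq_integral (A B : 𝔸) :
    exp B - exp A = ∫ s in (0 : ℝ)..1, exp ((1 - s) • A) * (B - A) * exp (s • B) := by
  -- `exp_continuous` is stated for normed `ℚ`-algebras.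
  let +nondep : NormedAlgebra ℚ 𝔸 := .restrictScalars ℚ ℝ 𝔸
  rw [intervalIntegral.integral_eq_sub_of_hasDerivAt
    (fun s _ => hasDerivAt_exp_one_sub_smul_mul_exp_smul A B s)
    (Continuous.intervalIntegrable (by fun_prop) 0 1)]
  simp

theorem slope_exp_add_smul (A B : 𝔸) {t τ : ℝ} (h : τ ≠ t) :
    slope (fun u : ℝ => exp (A + u • B)) t τ =
      ∫ s in (0 : ℝ)..1, exp ((1 - s) • (A + t • B)) * B * exp (s • (A + τ • B)) := by
  have hdiff : A + τ • B - (A + t • B) = (τ - t) • B := by rw [sub_smul]; abel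
  simp_rw [slope_def_module, exp_sub_exp_eq_integral (A + t • B), hdiff, mul_smul_comm,
    smul_mul_assoc, intervalIntegral.integral_smul, smul_smul,
    inv_mul_cancel₀ (sub_ne_zero.mpr h), one_smul]

end Duhamel

/-- **Derivative of the operator exponential.**
For bounded operators `X, Y` on a Banach space `E`, the derivative of the analytic map
`f(t) = e^{X + tY}` is `f'(t) = ∫_{0}^{1} e^{(1-s)(X+tY)} Y e^{s(X+tY)} ds`,
where the integral is a Bochner integral. -/
theorem bch_exp_derivative {E : Type*} [NormedAddCommGroup E] [NormedSpace ℝ E]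
    [CompleteSpace E] (X Y : E →L[ℝ] E) (t : ℝ) :
    HasDerivAt (fun τ : ℝ => exp (X + τ • Y))
      (∫ s in (0 : ℝ)..1,
        exp ((1 - s) • (X + t • Y)) * Y * exp (s • (X + t • Y))) t := by
  set I : ℝ → E →L[ℝ] E := fun τ =>
    ∫ s in (0 : ℝ)..1, exp ((1 - s) • (X + t • Y)) * Y * exp (s • (X + τ • Y))
  let +nondep : NormedAlgebra ℚ (E →L[ℝ] E) := .restrictScalars ℚ ℝ _
  have hI : Continuous I :=
    intervalIntegral.continuous_parametric_intervalIntegral_of_continuous' (by fun_prop) 0 1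
  rw [hasDerivAt_iff_tendsto_slope]
  refine (hI.continuousWithinAt (s := {t}ᶜ)).tendsto.congr' ?_
  filter_upwards [self_mem_nhdsWithin] with τ hτ
  exact (slope_exp_add_smul X Y hτ).symm
end

section
/- Let X, Y be bounded operators on a Banach space. If e^{α(X+Y)} = e^{αX} e^{αY} for all α > 0, then X and Y commute. -/
/-!
By analytic continuation the identity `exp (t • (X + Y)) = exp (t • X) * exp (t • Y)` holds for
all real `t`. Differentiating it and substituting it back gives
`Y * exp (t • X) * exp (t • Y) = exp (t • X) * Y * exp (t • Y)`, so `Y` commutes with every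
`exp (t • X)`; differentiating that at `t = 0` gives `Y * X = X * Y`.
-/

open NormedSpace

section RCLike

variable {𝕂 𝔸 : Type*} [RCLike 𝕂] [NormedRing 𝔸] [NormedAlgebra 𝕂 𝔸] [CompleteSpace 𝔸]

theorem analyticOnNhd_exp_smul_const (x : 𝔸) :
    AnalyticOnNhd 𝕂 (fun t : 𝕂 => exp (t • x)) Set.univ := fun t _ =>
  (exp_analytic (t • x)).comp_of_eq (((ContinuousLinearMap.id 𝕂 𝕂).smulRight x).analyticAt t) rfl

theorem commute_exp_smul_of_forall_exp_smul_add {x y : 𝔸}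
    (h : ∀ t : 𝕂, exp (t • (x + y)) = exp (t • x) * exp (t • y)) (t : 𝕂) :
    Commute y (exp (t • x)) := by
  have hprod : HasDerivAt (fun u : 𝕂 => exp (u • x) * exp (u • y))
      (x * exp (t • x) * exp (t • y) + exp (t • x) * (y * exp (t • y))) t :=
    (hasDerivAt_exp_smul_const' x t).mul (hasDerivAt_exp_smul_const' y t)
  have hsum : HasDerivAt (fun u : 𝕂 => exp (u • x) * exp (u • y))
      ((x + y) * (exp (t • x) * exp (t • y))) t := by
    rw [← h t]
    exact (hasDerivAt_exp_smul_const' (x + y) t).congr_of_eventuallyEq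
      (Filter.Eventually.of_forall fun u => (h u).symm)
  have key := hsum.unique hprod
  rw [add_mul, ← mul_assoc x, add_right_inj, ← mul_assoc y, ← mul_assoc (exp (t • x))] at key
  exact (isUnit_exp_of_mem_ball (𝕂 := 𝕂) <|
    (expSeries_radius_eq_top 𝕂 𝔸).symm ▸ edist_lt_top (t • y) 0).mul_left_inj.mp key

theorem commute_of_forall_commute_exp_smul {x y : 𝔸} (h : ∀ t : 𝕂, Commute y (exp (t • x))) :
    Commute x y := by
  have hleft := (hasDerivAt_exp_smul_const (𝕂 := 𝕂) x 0).const_mul y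
  have hright := (hasDerivAt_exp_smul_const' (𝕂 := 𝕂) x 0).mul_const y
  rw [zero_smul, exp_zero, one_mul] at hleft
  rw [zero_smul, exp_zero, mul_one] at hright
  exact hright.unique <|
    hleft.congr_of_eventuallyEq (Filter.Eventually.of_forall fun u => (h u).eq.symm)

end RCLike

theorem exp_smul_add_eq_of_forall_pos {𝔸 : Type*} [NormedRing 𝔸] [NormedAlgebra ℝ 𝔸]
    [CompleteSpace 𝔸] {x y : 𝔸}
    (h : ∀ α : ℝ, 0 < α → exp (α • (x + y)) = exp (α • x) * exp (α • y)) (t : ℝ) :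
    exp (t • (x + y)) = exp (t • x) * exp (t • y) :=
  congrFun ((analyticOnNhd_exp_smul_const (x + y)).eq_of_eventuallyEq
    ((analyticOnNhd_exp_smul_const x).mul (analyticOnNhd_exp_smul_const y))
    (Filter.eventually_of_mem (Ioi_mem_nhds one_pos) h)) t

/-- If `e^{α(X+Y)} = e^{αX} e^{αY}` for all `α > 0`, then the bounded operators `X` and `Y`
on a Banach space commute. -/
theorem exp_add_eq_exp_mul_exp_imp_commute {E : Type*} [NormedAddCommGroup E]
    [NormedSpace ℝ E] [CompleteSpace E] (X Y : E →L[ℝ] E)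
    (h : ∀ α : ℝ, 0 < α →
      exp (α • (X + Y)) = exp (α • X) * exp (α • Y)) :
    X * Y = Y * X :=
  commute_of_forall_commute_exp_smul <|
    commute_exp_smul_of_forall_exp_smul_add (exp_smul_add_eq_of_forall_pos h)
end

section
/- Let G = (Ω, E) be a graph, Ĕ the smallest equivalence relation on Ω containing E, Γ_G the alphabet of letters a_{(u,v)} for (u,v) ∈ Ĕ, and R_G the edge reduction rules consisting of ((a_{(u,v)}, a_{(v,w)}), a_{(u,w)}) for (u,v),(v,w),(u,w) ∈ Ĕ and (a_{(u,u)}, 1) for u ∈ Ω. Then the string-rewriting system (Γ_G*, →_{R_G}) is Noetherian and confluent. -/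
/-- The edge alphabet of a graph `(Ω, E)`: one letter `a_{(u,v)}` for each pair `(u,v)` in
the smallest equivalence relation `Ĕ` on `Ω` containing `E`. -/
def GraphLetter {Ω : Type*} (E : Ω → Ω → Prop) : Type _ :=
  { p : Ω × Ω // Relation.EqvGen E p.1 p.2 }

/-- The one-step rewriting relation on words over the edge alphabet induced by the edge
reduction rules: `(a_{(u,u)}, 1)` for `u ∈ Ω` and `((a_{(u,v)}, a_{(v,w)}), a_{(u,w)})`
for `(u,v), (v,w), (u,w) ∈ Ĕ`, applied in arbitrary context. -/
def GraphStep {Ω : Type*} (E : Ω → Ω → Prop) (x y : List (GraphLetter E)) : Prop :=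
  (∃ (w w' : List (GraphLetter E)) (a : GraphLetter E),
      a.1.1 = a.1.2 ∧ x = w ++ [a] ++ w' ∧ y = w ++ w') ∨
  (∃ (w w' : List (GraphLetter E)) (a b c : GraphLetter E),
      a.1.2 = b.1.1 ∧ c.1.1 = a.1.1 ∧ c.1.2 = b.1.2 ∧
      x = w ++ [a, b] ++ w' ∧ y = w ++ [c] ++ w')

/-!
Every rule shortens the word, so the system is Noetherian. For confluence we exhibit a
normal form `reduce x` that is reachable from `x` and is unchanged by every rewriting step.
It is computed from the right by a stack automaton `push`: a letter composable with the
top of the (already reduced) stack is composed with it and pushed again, a loop is dropped,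
and any other letter is put on top. Invariance under a step amounts to two facts: pushing
a loop onto a reduced word does nothing, and pushing `b` then `a` is pushing `a ∘ b`.
-/

section

variable {Ω : Type*} {E : Ω → Ω → Prop}

namespace GraphLetter

def comp (a b : GraphLetter E) (h : a.1.2 = b.1.1) : GraphLetter E :=
  ⟨(a.1.1, b.1.2), .trans _ _ _ a.2 (h ▸ b.2)⟩

lemma comp_of_isLoop_left {a b : GraphLetter E} (h : a.1.2 = b.1.1) (ha : a.1.1 = a.1.2) :
    comp a b h = b :=
  Subtype.ext (show (a.1.1, b.1.2) = b.1 by rw [ha, h])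

lemma comp_of_isLoop_right {a b : GraphLetter E} (h : a.1.2 = b.1.1) (hb : b.1.1 = b.1.2) :
    comp a b h = a :=
  Subtype.ext (show (a.1.1, b.1.2) = a.1 by rw [← hb, ← h])

lemma eq_comp {a b c : GraphLetter E} (h : a.1.2 = b.1.1) (hca : c.1.1 = a.1.1)
    (hcb : c.1.2 = b.1.2) : c = comp a b h :=
  Subtype.ext (show c.1 = (a.1.1, b.1.2) by rw [← hca, ← hcb])

end GraphLetter

namespace GraphStep

lemma length_lt {x y : List (GraphLetter E)} (h : GraphStep E x y) : y.length < x.length := by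
  rcases h with ⟨w, w', a, -, rfl, rfl⟩ | ⟨w, w', a, b, c, -, -, -, rfl, rfl⟩ <;> simp

lemma cons {x y : List (GraphLetter E)} (a : GraphLetter E) (h : GraphStep E x y) :
    GraphStep E (a :: x) (a :: y) := by
  rcases h with ⟨w, w', b, hb, rfl, rfl⟩ | ⟨w, w', b, c, d, h₁, h₂, h₃, rfl, rfl⟩
  · exact .inl ⟨a :: w, w', b, hb, rfl, rfl⟩
  · exact .inr ⟨a :: w, w', b, c, d, h₁, h₂, h₃, rfl, rfl⟩

theorem wellFounded_flip : WellFounded (flip (GraphStep E)) :=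
  Subrelation.wf (fun h => length_lt h) (measure List.length).wf

end GraphStep

namespace GraphWord

open GraphLetter

attribute [local instance] Classical.propDecidable

def IsReduced (l : List (GraphLetter E)) : Prop :=
  (∀ a ∈ l, a.1.1 ≠ a.1.2) ∧ l.IsChain (fun a b => a.1.2 ≠ b.1.1)

lemma IsReduced.nil : IsReduced ([] : List (GraphLetter E)) :=
  ⟨by simp, .nil⟩

lemma IsReduced.of_cons {b : GraphLetter E} {t : List (GraphLetter E)}
    (h : IsReduced (b :: t)) : IsReduced t :=
  ⟨fun a ha => h.1 a (List.mem_cons_of_mem _ ha), h.2.tail⟩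

noncomputable def push (a : GraphLetter E) : List (GraphLetter E) → List (GraphLetter E)
  | [] => if a.1.1 = a.1.2 then [] else [a]
  | b :: t =>
      if h : a.1.2 = b.1.1 then push (comp a b h) t
      else if a.1.1 = a.1.2 then b :: t else a :: b :: t

noncomputable def reduce (l : List (GraphLetter E)) : List (GraphLetter E) :=
  l.foldr push []

lemma push_of_isReduced_cons {b : GraphLetter E} {t : List (GraphLetter E)}
    (h : IsReduced (b :: t)) : push b t = b :: t := by
  cases t with
  | nil => simp [push, h.1 b (by simp)]
  | cons d r => simp [push, (List.isChain_cons_cons.mp h.2).1, h.1 b (by simp)]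

lemma push_of_isLoop {s : List (GraphLetter E)} (hs : IsReduced s) {a : GraphLetter E}
    (ha : a.1.1 = a.1.2) : push a s = s := by
  cases s with
  | nil => simp [push, ha]
  | cons b t =>
    by_cases h : a.1.2 = b.1.1
    · simp only [push, dif_pos h, comp_of_isLoop_left h ha]
      exact push_of_isReduced_cons hs
    · simp [push, h, ha]

lemma isReduced_push (a : GraphLetter E) :
    ∀ {s : List (GraphLetter E)}, IsReduced s → IsReduced (push a s)
  | [], _ => by
    by_cases ha : a.1.1 = a.1.2
    · simpa [push, ha] using IsReduced.nil
    · simp [push, ha, IsReduced]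
  | b :: t, hs => by
    by_cases h : a.1.2 = b.1.1
    · simpa [push, h] using isReduced_push (comp a b h) hs.of_cons
    by_cases ha : a.1.1 = a.1.2
    · simpa [push, h, ha] using hs
    · simp only [push, h, ha, dite_false, ite_false]
      exact ⟨List.forall_mem_cons.mpr ⟨ha, hs.1⟩, List.isChain_cons_cons.mpr ⟨h, hs.2⟩⟩

lemma isReduced_reduce (l : List (GraphLetter E)) : IsReduced (reduce l) := by
  induction l with
  | nil => exact IsReduced.nil
  | cons a l ih => exact isReduced_push a ih

lemma push_push (a b : GraphLetter E) (h : a.1.2 = b.1.1) :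
    ∀ s : List (GraphLetter E), push a (push b s) = push (comp a b h) s
  | [] => by
    by_cases hb : b.1.1 = b.1.2
    · simp [push, hb, comp_of_isLoop_right h hb]
    · simp [push, hb, h]
  | d :: t => by
    by_cases hb : b.1.2 = d.1.1
    · have h' : a.1.2 = (comp b d hb).1.1 := h
      have h'' : (comp a b h).1.2 = d.1.1 := hb
      calc push a (push b (d :: t)) = push a (push (comp b d hb) t) := by simp [push, hb]
        _ = push (comp (comp a b h) d h'') t := push_push a _ h' t
        _ = push (comp a b h) (d :: t) := by simp [push, h'']
    by_cases hbl : b.1.1 = b.1.2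
    · simp [push, hb, hbl, comp_of_isLoop_right h hbl]
    · simp [push, hb, hbl, h]

lemma reflTransGen_push (a : GraphLetter E) :
    ∀ s : List (GraphLetter E), Relation.ReflTransGen (GraphStep E) (a :: s) (push a s)
  | [] => by
    by_cases ha : a.1.1 = a.1.2
    · simpa [push, ha] using .single (.inl ⟨[], [], a, ha, rfl, rfl⟩)
    · simp [push, ha, Relation.ReflTransGen.refl]
  | b :: t => by
    by_cases h : a.1.2 = b.1.1
    · have hstep : GraphStep E (a :: b :: t) (comp a b h :: t) :=
        .inr ⟨[], t, a, b, comp a b h, h, rfl, rfl, rfl, rfl⟩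
      simpa [push, h] using (Relation.ReflTransGen.single hstep).trans (reflTransGen_push _ t)
    by_cases ha : a.1.1 = a.1.2
    · simpa [push, h, ha] using .single (.inl ⟨[], b :: t, a, ha, rfl, rfl⟩)
    · simp [push, h, ha, Relation.ReflTransGen.refl]

lemma reflTransGen_reduce :
    ∀ l : List (GraphLetter E), Relation.ReflTransGen (GraphStep E) l (reduce l)
  | [] => .refl
  | a :: l =>
    ((reflTransGen_reduce l).lift (a :: ·) fun _ _ h => h.cons a).trans
      (reflTransGen_push a (reduce l))

lemma reduce_append (u v : List (GraphLetter E)) :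
    reduce (u ++ v) = u.foldr push (reduce v) :=
  List.foldr_append

lemma reduce_eq_of_graphStep {x y : List (GraphLetter E)} (h : GraphStep E x y) :
    reduce x = reduce y := by
  rcases h with ⟨w, w', a, ha, rfl, rfl⟩ | ⟨w, w', a, b, c, h, hca, hcb, rfl, rfl⟩
  · rw [List.append_assoc, reduce_append, reduce_append, reduce_append]
    exact congrArg (w.foldr push) (push_of_isLoop (isReduced_reduce w') ha)
  · rw [List.append_assoc, List.append_assoc, reduce_append, reduce_append, reduce_append,
      reduce_append, eq_comp h hca hcb]
    exact congrArg (w.foldr push) (push_push a b h (reduce w'))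

lemma reduce_eq_of_reflTransGen {x y : List (GraphLetter E)}
    (h : Relation.ReflTransGen (GraphStep E) x y) : reduce x = reduce y := by
  induction h with
  | refl => rfl
  | tail _ hstep ih => exact ih.trans (reduce_eq_of_graphStep hstep)

end GraphWord

end

open GraphWord in
/-- The string-rewriting system `(Γ_G*, →_{R_G})` associated to a graph `G = (Ω, E)` is
Noetherian and confluent. -/
theorem graphStep_noetherian_and_confluent {Ω : Type*} (E : Ω → Ω → Prop) :
    (¬ ∃ f : ℕ → List (GraphLetter E), ∀ n, GraphStep E (f n) (f (n + 1))) ∧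
    (∀ w x y : List (GraphLetter E),
      Relation.ReflTransGen (GraphStep E) w x →
      Relation.ReflTransGen (GraphStep E) w y →
      Relation.Join (Relation.ReflTransGen (GraphStep E)) x y) := by
  refine ⟨fun ⟨f, hf⟩ => ?_, fun w x y hx hy => ?_⟩
  · exact (wellFounded_iff_isEmpty_descending_chain.1 GraphStep.wellFounded_flip).elim ⟨f, hf⟩
  · have hxy : reduce x = reduce y :=
      (reduce_eq_of_reflTransGen hx).symm.trans (reduce_eq_of_reflTransGen hy)
    exact ⟨reduce x, reflTransGen_reduce x, hxy ▸ reflTransGen_reduce y⟩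
end

section
/- Let (Ω, ⪯) be a linear order, E = {(u,v) : u ⪯ v}, and {A(u,v)}_{(u,v)∈E} ⊆ B(X) a family of dissipative bounded operators on a Banach space satisfying additivity: A(u,w) = A(u,v) + A(v,w) for u ⪯ v ⪯ w. Then for all u' ⪯ u ⪯ v ⪯ v': ‖e^{A(u',v')} − e^{A(u,v)}‖ ≤ ‖A(u',u)‖ + ‖A(v,v')‖. -/
/-!
If `x` and `y` are dissipative, `exp (x/n)` and `exp (y/n)` are contractions, so telescoping
`exp x - exp y = exp (x/n)^n - exp (y/n)^n` gives `‖exp x - exp y‖ ≤ n ‖exp (x/n) - exp (y/n)‖`,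
and the right side tends to `‖x - y‖` because `t ↦ exp (t x)` has derivative `x` at `0`.
Additivity turns `A(u',v') - A(u,v)` into `A(u',u) + A(v,v')`.
-/

open NormedSpace Filter Topology

section

variable {𝔸 : Type*} [NormedRing 𝔸]

theorem norm_pow_sub_pow_le_of_norm_le_one {a b : 𝔸} (ha : ‖a‖ ≤ 1) (hb : ‖b‖ ≤ 1) (n : ℕ) :
    ‖a ^ n - b ^ n‖ ≤ n * ‖a - b‖ := by
  -- `n = 0` is split off since `‖b ^ 0‖ = ‖1‖` need not be `≤ 1`
  rcases n with _ | n
  · simp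
  induction n with
  | zero => simp
  | succ n ih =>
    have hbn : ‖b ^ (n + 1)‖ ≤ 1 :=
      (norm_pow_le' b n.succ_pos).trans (pow_le_one₀ (norm_nonneg b) hb)
    calc ‖a ^ (n + 2) - b ^ (n + 2)‖
        = ‖a * (a ^ (n + 1) - b ^ (n + 1)) + (a - b) * b ^ (n + 1)‖ := by
          rw [pow_succ' a, pow_succ' b, mul_sub, sub_mul]; abel_nf
      _ ≤ ‖a‖ * ‖a ^ (n + 1) - b ^ (n + 1)‖ + ‖a - b‖ * ‖b ^ (n + 1)‖ :=
          (norm_add_le _ _).trans (add_le_add (norm_mul_le _ _) (norm_mul_le _ _))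
      _ ≤ 1 * ((n + 1 : ℕ) * ‖a - b‖) + ‖a - b‖ * 1 := by gcongr
      _ = (n + 2 : ℕ) * ‖a - b‖ := by push_cast; ring

variable [NormedAlgebra ℝ 𝔸] [CompleteSpace 𝔸]

def IsDissipative (x : 𝔸) : Prop := ∀ t : ℝ, 0 ≤ t → ‖exp (t • x)‖ ≤ 1

theorem exp_eq_exp_inv_smul_pow (x : 𝔸) {n : ℕ} (hn : n ≠ 0) :
    exp x = exp ((n : ℝ)⁻¹ • x) ^ n := by
  -- `exp_nsmul` is stated for `ℚ`-algebras
  let : NormedAlgebra ℚ 𝔸 := NormedAlgebra.restrictScalars ℚ ℝ 𝔸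
  rw [← exp_nsmul, ← Nat.cast_smul_eq_nsmul ℝ, smul_smul, mul_inv_cancel₀ (Nat.cast_ne_zero.2 hn),
    one_smul]

theorem tendsto_natCast_smul_exp_inv_smul_sub (x y : 𝔸) :
    Tendsto (fun n : ℕ ↦ (n : ℝ) • (exp ((n : ℝ)⁻¹ • x) - exp ((n : ℝ)⁻¹ • y))) atTop
      (𝓝 (x - y)) := by
  have hderiv : HasDerivAt (fun t : ℝ ↦ exp (t • x) - exp (t • y)) (x - y) 0 := by
    simpa using
      (hasDerivAt_exp_smul_const x (0 : ℝ)).fun_sub (hasDerivAt_exp_smul_const y (0 : ℝ))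
  have hinv : Tendsto (fun n : ℕ ↦ (n : ℝ)⁻¹) atTop (𝓝[≠] 0) :=
    (tendsto_inv_atTop_nhdsGT_zero.comp tendsto_natCast_atTop_atTop).mono_right
      (nhdsGT_le_nhdsNE 0)
  simpa [Function.comp_def] using hderiv.tendsto_slope_zero.comp hinv

theorem IsDissipative.norm_exp_sub_exp_le {x y : 𝔸} (hx : IsDissipative x)
    (hy : IsDissipative y) :
    ‖exp x - exp y‖ ≤ ‖x - y‖ := by
  refine ge_of_tendsto (tendsto_natCast_smul_exp_inv_smul_sub x y).norm ?_
  filter_upwards [eventually_ne_atTop 0] with n hn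
  have hinv : (0 : ℝ) ≤ (n : ℝ)⁻¹ := by positivity
  calc ‖exp x - exp y‖ = ‖exp ((n : ℝ)⁻¹ • x) ^ n - exp ((n : ℝ)⁻¹ • y) ^ n‖ := by
        rw [← exp_eq_exp_inv_smul_pow x hn, ← exp_eq_exp_inv_smul_pow y hn]
    _ ≤ n * ‖exp ((n : ℝ)⁻¹ • x) - exp ((n : ℝ)⁻¹ • y)‖ :=
        norm_pow_sub_pow_le_of_norm_le_one (hx _ hinv) (hy _ hinv) n
    _ = ‖(n : ℝ) • (exp ((n : ℝ)⁻¹ • x) - exp ((n : ℝ)⁻¹ • y))‖ := by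
        rw [norm_smul, Real.norm_natCast]

end

/-- Let `(Ω, ⪯)` be a linear order and `{A(u,v)}_{u ⪯ v}` an additive family of
dissipative bounded operators on a Banach space (dissipativity encoded as: `e^{αA}` is a
contraction for all `α ≥ 0`).  Then for all `u' ⪯ u ⪯ v ⪯ v'`:
`‖e^{A(u',v')} − e^{A(u,v)}‖ ≤ ‖A(u',u)‖ + ‖A(v,v')‖`. -/
theorem additive_dissipative_exp_estimate {Ω X : Type*} [LinearOrder Ω]
    [NormedAddCommGroup X] [NormedSpace ℝ X] [CompleteSpace X]
    (A : Ω → Ω → X →L[ℝ] X)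
    (hdiss : ∀ u v : Ω, u ≤ v → ∀ α : ℝ, 0 ≤ α → ‖(expSeries ℝ (X →L[ℝ] X)).sum (α • A u v)‖ ≤ 1)
    (hadd : ∀ u v w : Ω, u ≤ v → v ≤ w → A u w = A u v + A v w) :
    ∀ u' u v v' : Ω, u' ≤ u → u ≤ v → v ≤ v' →
      ‖(expSeries ℝ (X →L[ℝ] X)).sum (A u' v') - (expSeries ℝ (X →L[ℝ] X)).sum (A u v)‖ ≤ ‖A u' u‖ + ‖A v v'‖ := by
  intro u' u v v' hu'u huv hvv'
  simp only [← exp_eq_expSeries_sum ℝ] at hdiss ⊢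
  have hsplit : A u' v' - A u v = A u' u + A v v' := by
    rw [hadd u' u v' hu'u (huv.trans hvv'), hadd u v v' huv hvv']
    abel
  calc ‖exp (A u' v') - exp (A u v)‖
      ≤ ‖A u' v' - A u v‖ :=
        IsDissipative.norm_exp_sub_exp_le (hdiss u' v' (hu'u.trans (huv.trans hvv')))
          (hdiss u v huv)
    _ ≤ ‖A u' u‖ + ‖A v v'‖ := hsplit ▸ norm_add_le _ _
end

section
/- Let (Ω, ⪯) be a linear order and G_G the edge group of the graph (Ω, E) with E = {(u,v) : u ⪯ v}. For u, v ∈ Ω define cover_{u,v} = 1_{[v)} − 1_{[u)} : Ω → ℤ where [w) = {w' : w' ≺ w}, and extend to words x = a_{(u₁,v₁)}⋯a_{(u_n,v_n)} by cover_x = Σ_i cover_{u_i, v_i}. Then cover is invariant under the rewriting equivalence: if x ↔*_G x' then cover_x = cover_{x'}; hence cover descends to a well-defined map on the edge group G_G, and cover_{[x][y]} = cover_{[x]} + cover_{[y]}. -/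
/-- The cover `1_{[v)} − 1_{[u)} : Ω → ℤ` of a single pair `(u,v)`, where
`[w) = {w' : w' < w}`. -/
def coverPair {Ω : Type*} [LinearOrder Ω] (p : Ω × Ω) : Ω → ℤ := fun w =>
  (if w < p.2 then 1 else 0) - (if w < p.1 then 1 else 0)

/-- The cover of a word `x = a_{(u₁,v₁)} ⋯ a_{(uₙ,vₙ)}`: the sum `Σᵢ cover_{uᵢ,vᵢ}`. -/
def coverWord {Ω : Type*} [LinearOrder Ω]
    (x : List (GraphLetter ((· ≤ ·) : Ω → Ω → Prop))) : Ω → ℤ :=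
  (x.map fun a => coverPair a.1).sum

lemma coverWord_append {Ω : Type*} [LinearOrder Ω]
    (x y : List (GraphLetter ((· ≤ ·) : Ω → Ω → Prop))) :
    coverWord (x ++ y) = coverWord x + coverWord y := by
  simp [coverWord]

/-- For a linearly ordered graph `(Ω, {(u,v) : u ⪯ v})`, the cover is invariant under the
rewriting equivalence `↔*_G`, hence descends to a well-defined map on the edge group
`G_G`; moreover it is additive on products: `cover_{[x][y]} = cover_{[x]} + cover_{[y]}`. -/
theorem cover_invariant_and_additive {Ω : Type*} [LinearOrder Ω] :
    (∀ x x' : List (GraphLetter ((· ≤ ·) : Ω → Ω → Prop)),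
      Relation.EqvGen (GraphStep ((· ≤ ·) : Ω → Ω → Prop)) x x' →
      coverWord x = coverWord x') ∧
    (∀ x y : List (GraphLetter ((· ≤ ·) : Ω → Ω → Prop)),
      coverWord (x ++ y) = coverWord x + coverWord y) := by
  constructor
  · intro x x' h
    induction h with
    | refl => rfl
    | symm _ _ _ ih => exact ih.symm
    | trans _ _ _ _ _ ih1 ih2 => exact ih1.trans ih2
    | rel x y h =>
      rcases h with ⟨w, w', a, ha, hx, hy⟩ | ⟨w, w', a, b, c, h1, h2, h3, hx, hy⟩
      · subst hx; subst hy
        simp only [coverWord_append]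
        have : coverWord [a] = 0 := by
          funext z; simp [coverWord, coverPair, ha]
        rw [this]; abel
      · subst hx; subst hy
        simp only [coverWord_append]
        have : coverWord [a, b] = coverWord [c] := by
          funext z; simp [coverWord, coverPair, h1, h2, h3]
        rw [this]
  · exact coverWord_append
end
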